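/- For real numbers s, t with |s| + |t| ≤ 2, each of the quantities p_a, p_b, p_c, p_d defined by the explicit arccos formulas lies in [0, 1]. -/
import Mathlib


open Real

/-- The asymptotic probability `p_a` of an `a`-edge, for tilt `(s, t)`. -/
noncomputable def pA (s t : ℝ) : ℝ :=
  t / 4 + (1 / (2 * π)) * arccos ((cos (π * t / 2) - cos (π * s / 2)) / 2)

/-- The asymptotic probability `p_b` of a `b`-edge, for tilt `(s, t)`. -/
noncomputable def pB (s t : ℝ) : ℝ :=
  -t / 4 + (1 / (2 * π)) * arccos ((cos (π * t / 2) - cos (π * s / 2)) / 2)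

/-- The asymptotic probability `p_c` of a `c`-edge, for tilt `(s, t)`. -/
noncomputable def pC (s t : ℝ) : ℝ :=
  -s / 4 + (1 / (2 * π)) * arccos ((cos (π * s / 2) - cos (π * t / 2)) / 2)

/-- The asymptotic probability `p_d` of a `d`-edge, for tilt `(s, t)`. -/
noncomputable def pD (s t : ℝ) : ℝ :=
  s / 4 + (1 / (2 * π)) * arccos ((cos (π * s / 2) - cos (π * t / 2)) / 2)

lemma arccos_antitone {x y : ℝ} (h : x ≤ y) : arccos y ≤ arccos x := by
  unfold Real.arccos
  have := monotone_arcsin h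
  linarith

lemma key_aux (s t : ℝ) (h : |s| + |t| ≤ 2) :
    t / 4 + (1 / (2 * π)) * arccos ((cos (π * t / 2) - cos (π * s / 2)) / 2)
      ∈ Set.Icc (0 : ℝ) 1 := by
  have hπ : (0:ℝ) < π := pi_pos
  have hs2 : |s| ≤ 2 := by have := abs_nonneg t; linarith
  have ht2 : |t| ≤ 2 := by have := abs_nonneg s; linarith
  have hts : -t ≤ |t| := neg_le_abs t
  have hts' : t ≤ |t| := le_abs_self t
  -- cos(πs/2) + cos(πt/2) ≥ 0
  have hsum : 0 ≤ cos (π * s / 2) + cos (π * t / 2) := by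
    have hcc : cos (π * s / 2) + cos (π * t / 2) =
        2 * cos ((π * s / 2 + π * t / 2) / 2) * cos ((π * s / 2 - π * t / 2) / 2) :=
      cos_add_cos _ _
    rw [hcc]
    have habs1 : |s + t| ≤ 2 := (abs_add_le s t).trans h
    have habs2 : |s - t| ≤ 2 := (abs_sub s t).trans h
    have h1 : 0 ≤ cos ((π * s / 2 + π * t / 2) / 2) := by
      apply cos_nonneg_of_mem_Icc
      constructor
      · have := neg_abs_le (s + t)
        rw [abs_le] at habs1
        nlinarith
      · rw [abs_le] at habs1
        nlinarith
    have h2 : 0 ≤ cos ((π * s / 2 - π * t / 2) / 2) := by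
      apply cos_nonneg_of_mem_Icc
      constructor
      · rw [abs_le] at habs2
        nlinarith
      · rw [abs_le] at habs2
        nlinarith
    positivity
  set x := (cos (π * t / 2) - cos (π * s / 2)) / 2 with hx
  -- upper bound on arccos argument stuff
  have harcle : arccos x ≤ π := arccos_le_pi x
  have harcge : π * |t| / 2 ≤ arccos x := by
    have hxle : x ≤ cos (π * |t| / 2) := by
      have : cos (π * |t| / 2) = cos (π * t / 2) := by
        rcases abs_cases t with ⟨he, _⟩ | ⟨he, _⟩
        · rw [he]
        · rw [he]
          rw [show π * -t / 2 = -(π * t / 2) by ring, cos_neg]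
      rw [this, hx]
      linarith
    have := arccos_antitone hxle
    rw [arccos_cos (by positivity) (by nlinarith [abs_nonneg t])] at this
    exact this
  constructor
  · have h1 : |t| / 4 ≤ (1 / (2 * π)) * arccos x := by
      rw [div_mul_eq_mul_div, one_mul, le_div_iff₀ (by positivity)]
      nlinarith
    nlinarith
  · have h1 : (1 / (2 * π)) * arccos x ≤ 1 / 2 := by
      rw [div_mul_eq_mul_div, one_mul, div_le_div_iff₀ (by positivity) (by norm_num)]
      nlinarith
    nlinarith

/-- For any tilt `(s, t)` with `|s| + |t| ≤ 2`, each of the quantities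
`p_a, p_b, p_c, p_d` lies in `[0, 1]`. -/
theorem pABCD_mem_Icc (s t : ℝ) (h : |s| + |t| ≤ 2) :
    pA s t ∈ Set.Icc (0 : ℝ) 1 ∧ pB s t ∈ Set.Icc (0 : ℝ) 1 ∧
    pC s t ∈ Set.Icc (0 : ℝ) 1 ∧ pD s t ∈ Set.Icc (0 : ℝ) 1 := by
  have h1 := key_aux s t h
  have h2 := key_aux s (-t) (by rwa [abs_neg])
  have h3 := key_aux t (-s) (by rw [abs_neg]; linarith)
  have h4 := key_aux t s (by linarith)
  refine ⟨?_, ?_, ?_, ?_⟩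
  · simpa [pA] using h1
  · have : pB s t = -t / 4 + (1 / (2 * π)) *
        arccos ((cos (π * -t / 2) - cos (π * s / 2)) / 2) := by
      rw [pB, show π * -t / 2 = -(π * t / 2) by ring, cos_neg]
    rw [this]
    simpa using h2
  · have : pC s t = -s / 4 + (1 / (2 * π)) *
        arccos ((cos (π * -s / 2) - cos (π * t / 2)) / 2) := by
      rw [pC, show π * -s / 2 = -(π * s / 2) by ring, cos_neg]
    rw [this]
    simpa using h3
  · simpa [pD] using h4
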